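/- arXiv:math/0702550 — 3 statements merged into one kernel-verified Lean document; each statement's English description precedes it below -/
import Mathlib

section
/- For all n ≥ 1, the number f_n = 2(n+3)·4^(n-2) − (n/2)·C(2n,n) is a positive integer, i.e., 2(n+3)·4^(n-2) > (n/2)·C(2n,n) and the expression is integral. -/
private lemma aux1 : ∀ k : ℕ, 4 * Nat.centralBinom (k + 5) < 4 ^ (k + 5) := by
  intro k
  induction k with
  | zero => decide
  | succ k ih =>
    have h := Nat.succ_mul_centralBinom_succ (k + 5)
    have hpos : 0 < k + 5 + 1 := by omega
    refine Nat.lt_of_mul_lt_mul_left (a := k + 5 + 1) ?_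
    calc (k + 5 + 1) * (4 * Nat.centralBinom (k + 5 + 1))
        = 4 * ((k + 5 + 1) * Nat.centralBinom (k + 5 + 1)) := by ring
      _ = 4 * (2 * (2 * (k + 5) + 1) * Nat.centralBinom (k + 5)) := by rw [h]
      _ ≤ (k + 5 + 1) * (4 * (4 * Nat.centralBinom (k + 5))) := by nlinarith [Nat.centralBinom_pos (k+5)]
      _ < (k + 5 + 1) * (4 * 4 ^ (k + 5)) := by
          have h5 : 0 < k + 5 + 1 := by omega
          nlinarith [ih]
      _ = (k + 5 + 1) * 4 ^ (k + 5 + 1) := by ring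

private lemma key : ∀ n : ℕ, 1 ≤ n → 4 * n * ((2 * n).choose n) < (n + 3) * 4 ^ n := by
  intro n hn
  rcases lt_or_ge n 5 with h | h
  · interval_cases n <;> decide
  · obtain ⟨k, rfl⟩ : ∃ k, n = k + 5 := ⟨n - 5, by omega⟩
    have h1 := aux1 k
    rw [Nat.centralBinom_eq_two_mul_choose] at h1
    calc 4 * (k + 5) * ((2 * (k + 5)).choose (k + 5))
        = (k + 5) * (4 * (2 * (k + 5)).choose (k + 5)) := by ring
      _ < (k + 5) * 4 ^ (k + 5) := by
          have h5 : 0 < k + 5 := by omega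
          nlinarith [h1]
      _ ≤ (k + 5 + 3) * 4 ^ (k + 5) := Nat.mul_le_mul_right _ (by omega)

/-- For all `n ≥ 1`, the number `f_n = (n+3)·4^n/8 − (n/2)·C(2n,n)` (i.e.
`2(n+3)·4^(n-2) − (n/2)·C(2n,n)`) is a positive integer. -/
theorem convex_permutomino_count_pos_int (n : ℕ) (hn : 1 ≤ n) :
    ((n : ℚ) * ((2 * n).choose n) / 2 < ((n : ℚ) + 3) * 4 ^ n / 8) ∧
    ∃ m : ℕ, (m : ℚ) = ((n : ℚ) + 3) * 4 ^ n / 8 - (n : ℚ) * ((2 * n).choose n) / 2 := by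
  have hk := key n hn
  constructor
  · rw [div_lt_div_iff₀ (by norm_num) (by norm_num)]
    have : ((4 * n * ((2 * n).choose n) : ℕ) : ℚ) < (((n + 3) * 4 ^ n : ℕ) : ℚ) := by
      exact_mod_cast hk
    push_cast at this
    nlinarith [this]
  · match n, hn with
    | 1, _ => exact ⟨1, by norm_num⟩
    | (k + 2), _ =>
      -- C(2(k+2), k+2) = 2 * C(2k+3, k+1)
      have hc : (2 * (k + 2)).choose (k + 2) = 2 * (2 * k + 3).choose (k + 1) := by
        have e1 : 2 * (k + 2) = (2 * k + 3) + 1 := by ring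
        rw [e1, Nat.choose_succ_succ' (2 * k + 3) (k + 1)]
        have e2 : (2 * k + 3).choose (k + 1 + 1) = (2 * k + 3).choose (k + 1) := by
          rw [← Nat.choose_symm (by omega : k + 1 + 1 ≤ 2 * k + 3)]
          congr 1
          omega
        omega
      have hle : (k + 2) * (2 * k + 3).choose (k + 1) ≤ (k + 5) * (2 * 4 ^ k) := by
        have := key (k + 2) (by omega)
        rw [hc] at this
        have e : (4 : ℕ) ^ (k + 2) = 16 * 4 ^ k := by ring
        rw [e] at this
        nlinarith
      refine ⟨(k + 5) * (2 * 4 ^ k) - (k + 2) * (2 * k + 3).choose (k + 1), ?_⟩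
      rw [hc]
      push_cast [Nat.cast_sub hle]
      have e : (4 : ℚ) ^ (k + 2) = 16 * 4 ^ k := by ring
      rw [e]
      ring
end

section
/- Let R(s,t) be the formal power series solution of R(s,t)·(1 + s²t/(1−s)) = (2st/(1−s))·(B(1,t) − B(s,t)) + (st/(1−s))·R(1,t), where B(s,t) = st/(1−2st). Then R(1,t) = 1/√(1−4t) − 1/(1−2t). -/
/-!
The kernel `(1 - s) + s²t` vanishes at the Catalan series `c = 1 + t c²`, so substituting
`s = c` leaves `c t R(1) = 2 c t (B(c) - B(1))`, and `c t` cancels. Since `(1 - 2ct)² = 1 - 4t`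
and the central binomial series `S` satisfies `S² (1 - 4t) = 1`, comparing constant coefficients
gives `S (1 - 2ct) = 1`, which turns `B(c) = ct / (1 - 2ct)` into `ctS = (S - 1) / 2`.
The identity `S² (1 - 4t) = 1` comes from the differential equation `(1 - 4t) S' = 2S`, which is
`(n + 1) C(2n + 2, n + 1) = 2 (2n + 1) C(2n, n)` coefficientwise.
-/

open PowerSeries

namespace PowerSeries

variable (K : Type*) [CommRing K]

noncomputable def centralBinomSeries : K⟦X⟧ := mk fun n => (n.centralBinom : K)

variable {K}

@[simp]
lemma coeff_centralBinomSeries (n : ℕ) : coeff n (centralBinomSeries K) = n.centralBinom := by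
  simp [centralBinomSeries]

@[simp]
lemma constantCoeff_centralBinomSeries : constantCoeff (centralBinomSeries K) = 1 := by
  simp [centralBinomSeries]

lemma one_sub_four_mul_X_mul_derivative_centralBinomSeries :
    (1 - 4 * X) * d⁄dX K (centralBinomSeries K) = 2 * centralBinomSeries K := by
  rw [← map_ofNat C 4, ← map_ofNat C 2, sub_mul, one_mul, mul_assoc]
  ext n
  rcases n with _ | n
  · simp only [map_sub, coeff_zero_X_mul, coeff_C_mul, coeff_derivative, coeff_centralBinomSeries]
    norm_num [Nat.centralBinom, Nat.choose]
  · have key := congr((↑$(Nat.succ_mul_centralBinom_succ (n + 1)) : K))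
    push_cast at key
    simp only [map_sub, coeff_succ_X_mul, coeff_C_mul, coeff_derivative, coeff_centralBinomSeries]
    push_cast
    linear_combination key

lemma centralBinomSeries_sq_mul_one_sub_four_mul_X [IsAddTorsionFree K] :
    centralBinomSeries K ^ 2 * (1 - 4 * X) = 1 := by
  refine derivative.ext ?_ (by simp)
  have hlin : d⁄dX K (1 - 4 * X : K⟦X⟧) = -4 := by
    simp [← map_ofNat C 4]
  rw [Derivation.leibniz, derivative_pow, hlin, derivative_one, smul_eq_mul, smul_eq_mul]
  linear_combination (2 * centralBinomSeries K) *
    one_sub_four_mul_X_mul_derivative_centralBinomSeries (K := K)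

lemma constantCoeff_eq_one_of_sq_mul_X_add_one {c : K⟦X⟧} (hc : c ^ 2 * X + 1 = c) :
    constantCoeff c = 1 := by
  simpa using congr(constantCoeff $hc).symm

lemma one_sub_two_mul_mul_X_sq_of_sq_mul_X_add_one {c : K⟦X⟧} (hc : c ^ 2 * X + 1 = c) :
    (1 - 2 * c * X) ^ 2 = 1 - 4 * X := by
  linear_combination (4 * X) * hc

lemma centralBinomSeries_mul_one_sub_two_mul_mul_X [IsDomain K] [CharZero K] {c : K⟦X⟧}
    (hc : c ^ 2 * X + 1 = c) : centralBinomSeries K * (1 - 2 * c * X) = 1 := by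
  have hsq : (centralBinomSeries K * (1 - 2 * c * X)) ^ 2 = 1 := by
    rw [mul_pow, one_sub_two_mul_mul_X_sq_of_sq_mul_X_add_one hc,
      centralBinomSeries_sq_mul_one_sub_four_mul_X]
  refine (sq_eq_one_iff.mp hsq).resolve_right fun h => ?_
  have h1 : (1 : K) = -1 := by
    simpa [constantCoeff_eq_one_of_sq_mul_X_add_one hc] using congr(constantCoeff $h)
  exact two_ne_zero (by linear_combination h1 : (2 : K) = 0)

end PowerSeries

/-- Kernel method: if `R(s,t)` satisfies
`R(s,t)·((1−s) + s²t) = 2st·(B(1,t) − B(s,t)) + st·R(1,t)` for all `s`, where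
`B(s,t) = st/(1−2st)`, then `R(1,t) = 1/√(1−4t) − 1/(1−2t)`, where
`1/√(1−4t) = Σ_{n≥0} C(2n,n) tⁿ`. -/
theorem kernel_method_R
    (B R : PowerSeries ℚ → PowerSeries ℚ)
    (hB : ∀ s : PowerSeries ℚ, B s = s * X * (1 - 2 * s * X)⁻¹)
    (hR : ∀ s : PowerSeries ℚ,
      R s * ((1 - s) + s ^ 2 * X) = 2 * s * X * (B 1 - B s) + s * X * R 1)
    (S : PowerSeries ℚ) (hS : ∀ n : ℕ, coeff n S = ((2 * n).choose n : ℚ)) :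
    R 1 = S - (1 - 2 * X)⁻¹ := by
  obtain rfl : S = centralBinomSeries ℚ := ext fun n => by
    simp [hS, Nat.centralBinom_eq_two_mul_choose]
  set c := catalanSeries.map (Nat.castRingHom ℚ)
  have hc : c ^ 2 * X + 1 = c := by
    simpa using congr(map (Nat.castRingHom ℚ) $catalanSeries_sq_mul_X_add_one)
  have hc0 := constantCoeff_eq_one_of_sq_mul_X_add_one hc
  have hcX : c * X ≠ 0 := mul_ne_zero (fun h => by simp [h] at hc0) X_ne_zero
  have hkernel : (1 - c) + c ^ 2 * X = 0 := by linear_combination hc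
  have hSc := centralBinomSeries_mul_one_sub_two_mul_mul_X hc
  have hBc : B c = c * X * centralBinomSeries ℚ := by
    rw [hB, (inv_eq_iff_mul_eq_one (by simp [hc0])).mpr hSc]
  have hB1 : B 1 = X * (1 - 2 * X)⁻¹ := by simp [hB]
  have hinv : (1 - 2 * X : ℚ⟦X⟧) * (1 - 2 * X)⁻¹ = 1 := PowerSeries.mul_inv_cancel _ (by simp)
  have hRc := hR c
  rw [hkernel, mul_zero, hBc, hB1] at hRc
  apply mul_left_cancel₀ hcX
  linear_combination -hRc - c * X * hSc + c * X * hinv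
end

section
/- The generating function of directed convex permutominoes, B(1,t) + (1/2)·R(1,t) with B(1,t) = t/(1−2t) and R(1,t) = 1/√(1−4t) − 1/(1−2t), equals (1−√(1−4t))/(2√(1−4t)), and its coefficient of t^n is (1/2)·C(2n,n) for n ≥ 1. -/
open PowerSeries

/-!
With `s = √(1 − 4t)`, the left-hand side equals `(s⁻¹ − 1)/2`, and the first identity is rational
algebra. Differentiating `s² = 1 − 4t` gives `s s' = −2`, so `f = s⁻¹` satisfies
`(1 − 4t) f' = 2 f`; on coefficients this is `(n + 1) fₙ₊₁ = 2 (2n + 1) fₙ`, the recurrence of the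
central binomial coefficients, and `f₀ = 1`.
-/

namespace PowerSeries

variable {K : Type*} [Field K]

theorem one_sub_mul_inv_two_mul {S : K⟦X⟧} (hS : constantCoeff S ≠ 0) :
    (1 - S) * (2 * S)⁻¹ = C (1 / 2) * (S⁻¹ - 1) := by
  rw [PowerSeries.mul_inv_rev, ← map_ofNat C, C_inv, ← one_div]
  linear_combination (-C (1 / 2 : K)) * PowerSeries.mul_inv_cancel S hS

variable [CharZero K]

theorem coeff_eq_centralBinom_of_derivative {f : K⟦X⟧} (hf0 : constantCoeff f = 1)
    (hf : (1 - 4 * X) * d⁄dX K f = 2 * f) (n : ℕ) :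
    coeff n f = Nat.centralBinom n := by
  induction n with
  | zero => simpa using hf0
  | succ n ih =>
    have hrec : coeff n (d⁄dX K f) - 4 * coeff n (X * d⁄dX K f) = 2 * coeff n f := by
      simpa [sub_mul, mul_assoc, ← map_ofNat (C (R := K)), coeff_C_mul]
        using congrArg (coeff n) hf
    have hX : coeff n (X * d⁄dX K f) = n * coeff n f := by
      cases n with
      | zero => simp
      | succ m => rw [coeff_succ_X_mul, coeff_derivative]; push_cast; ring
    rw [coeff_derivative, hX, ih] at hrec
    have hcb : ((n + 1 : ℕ) : K) * Nat.centralBinom (n + 1)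
        = 2 * (2 * n + 1) * Nat.centralBinom n := by
      exact_mod_cast Nat.succ_mul_centralBinom_succ n
    apply mul_left_cancel₀ (Nat.cast_add_one_ne_zero n)
    push_cast at hcb
    linear_combination hrec - hcb

section SqrtOneSubFourX

variable {S : K⟦X⟧} (hS : S ^ 2 = 1 - 4 * X)
include hS

theorem constantCoeff_ne_zero_of_sq_eq : constantCoeff S ≠ 0 := by
  have h := congrArg constantCoeff hS
  simp only [map_pow, map_sub, map_one, map_mul, map_ofNat, constantCoeff_X, mul_zero,
    sub_zero] at h
  exact fun h0 => by simp [h0] at h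

theorem mul_derivative_eq_neg_two : S * d⁄dX K S = -2 := by
  have h : C 2 * (S * d⁄dX K S) = -C 4 := by
    simpa [← map_ofNat (C (R := K))] using congrArg (d⁄dX K) hS
  rw [map_ofNat, map_ofNat] at h
  have h2 : (2 : K⟦X⟧) ≠ 0 := fun h2 => by simpa [map_ofNat] using congrArg constantCoeff h2
  apply mul_left_cancel₀ h2
  linear_combination h

theorem one_sub_four_X_mul_derivative_inv : (1 - 4 * X) * d⁄dX K S⁻¹ = 2 * S⁻¹ := by
  have hinv := PowerSeries.mul_inv_cancel S (constantCoeff_ne_zero_of_sq_eq hS)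
  rw [derivative_inv', ← hS]
  linear_combination (-S⁻¹ * S⁻¹ * S) * mul_derivative_eq_neg_two hS + 2 * S⁻¹ * hinv

theorem coeff_inv_eq_centralBinom (hS0 : constantCoeff S = 1) (n : ℕ) :
    coeff n S⁻¹ = Nat.centralBinom n :=
  coeff_eq_centralBinom_of_derivative (by simp [constantCoeff_inv, hS0])
    (one_sub_four_X_mul_derivative_inv hS) n

end SqrtOneSubFourX

end PowerSeries

/-- The generating function of directed convex permutominoes, `B(1,t) + (1/2)·R(1,t)`
with `B(1,t) = t/(1−2t)` and `R(1,t) = 1/√(1−4t) − 1/(1−2t)`, equals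
`(1−√(1−4t))/(2√(1−4t))`, and its coefficient of `t^n` is `C(2n,n)/2` for `n ≥ 1`. -/
theorem directed_convex_gf (sq : PowerSeries ℚ) (hsq : sq ^ 2 = 1 - 4 * X)
    (hsq0 : constantCoeff sq = 1) :
    X * (1 - 2 * X)⁻¹ + C (1 / 2 : ℚ) * (sq⁻¹ - (1 - 2 * X)⁻¹)
      = (1 - sq) * (2 * sq)⁻¹ ∧
    ∀ n : ℕ, 1 ≤ n →
      coeff n ((1 - sq) * (2 * sq)⁻¹) = ((2 * n).choose n : ℚ) / 2 := by
  rw [one_sub_mul_inv_two_mul (by simp [hsq0])]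
  refine ⟨?_, fun n hn => ?_⟩
  · have hinv := PowerSeries.mul_inv_cancel (1 - 2 * X : ℚ⟦X⟧) (by simp)
    have hhalf : C (1 / 2 : ℚ) * 2 = 1 := by rw [← map_ofNat C, ← map_mul]; norm_num
    linear_combination (-C (1 / 2 : ℚ)) * hinv - (X * (1 - 2 * X)⁻¹) * hhalf
  · rw [coeff_C_mul, map_sub, coeff_inv_eq_centralBinom hsq hsq0, coeff_one, if_neg (by omega),
      Nat.centralBinom]
    ring
end
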